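/- arXiv:2406.15655 — 6 statements merged into one kernel-verified Lean document; each statement's English description precedes it below -/
import Mathlib

section
/- Let u1, u2, g1, g2 and beta be positive real numbers. Define beta1* = (u2·g1·beta)/(u1·g2 + u2·g1) and beta2* = (u1·g2·beta)/(u1·g2 + u2·g1). Then beta1* + beta2* = beta, and for all positive real numbers beta1, beta2 with beta1 + beta2 ≤ beta, the quantity (g1/u1)·log(1/(2·beta1*)) + (g2/u2)·log(1/(2·beta2*)) ≤ (g1/u1)·log(1/(2·beta1)) + (g2/u2)·log(1/(2·beta2)). That is, the allocation (beta1*, beta2*) minimizes the total privacy loss epsilon1 + epsilon2 where epsilon_i = (g_i/u_i)·log(1/(2·beta_i)), subject to the constraint beta1 + beta2 ≤ beta. -/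
open Real

/-- Optimal budget apportionment for a 2-query conjunction/disjunction:
the allocation `β1* = u2·g1·β/(u1·g2+u2·g1)`, `β2* = u1·g2·β/(u1·g2+u2·g1)`
sums to `β` and minimizes total privacy loss
`ε1 + ε2 = (g1/u1)·log(1/(2β1)) + (g2/u2)·log(1/(2β2))`
subject to `β1 + β2 ≤ β`. -/
theorem probe_two_query_apportionment
    (u1 u2 g1 g2 β : ℝ)
    (hu1 : 0 < u1) (hu2 : 0 < u2) (hg1 : 0 < g1) (hg2 : 0 < g2) (hβ : 0 < β) :
    (u2 * g1 * β / (u1 * g2 + u2 * g1)) + (u1 * g2 * β / (u1 * g2 + u2 * g1)) = β ∧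
    ∀ β1 β2 : ℝ, 0 < β1 → 0 < β2 → β1 + β2 ≤ β →
      (g1 / u1) * Real.log (1 / (2 * (u2 * g1 * β / (u1 * g2 + u2 * g1)))) +
        (g2 / u2) * Real.log (1 / (2 * (u1 * g2 * β / (u1 * g2 + u2 * g1)))) ≤
      (g1 / u1) * Real.log (1 / (2 * β1)) + (g2 / u2) * Real.log (1 / (2 * β2)) := by
  have hc : 0 < u1 * g2 + u2 * g1 := by positivity
  constructor
  · field_simp
    ring
  · intro β1 β2 hp1 hp2 hsum
    set b1 : ℝ := u2 * g1 * β / (u1 * g2 + u2 * g1) with hb1def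
    set b2 : ℝ := u1 * g2 * β / (u1 * g2 + u2 * g1) with hb2def
    have hpb1 : 0 < b1 := by rw [hb1def]; positivity
    have hpb2 : 0 < b2 := by rw [hb2def]; positivity
    have h1 : Real.log β1 - Real.log b1 ≤ β1 / b1 - 1 := by
      rw [← Real.log_div (ne_of_gt hp1) (ne_of_gt hpb1)]
      exact Real.log_le_sub_one_of_pos (by positivity)
    have h2 : Real.log β2 - Real.log b2 ≤ β2 / b2 - 1 := by
      rw [← Real.log_div (ne_of_gt hp2) (ne_of_gt hpb2)]
      exact Real.log_le_sub_one_of_pos (by positivity)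
    have ha : 0 < g1 / u1 := by positivity
    have hb : 0 < g2 / u2 := by positivity
    have hslack : (g1 / u1) * (β1 / b1 - 1) + (g2 / u2) * (β2 / b2 - 1)
        = (u1 * g2 + u2 * g1) / (u1 * u2 * β) * (β1 + β2 - β) := by
      rw [hb1def, hb2def]
      field_simp
      ring
    have hk : 0 < (u1 * g2 + u2 * g1) / (u1 * u2 * β) := by positivity
    have hle : (g1 / u1) * (β1 / b1 - 1) + (g2 / u2) * (β2 / b2 - 1) ≤ 0 := by
      rw [hslack]
      exact mul_nonpos_of_nonneg_of_nonpos (le_of_lt hk) (by linarith)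
    have key : (g1 / u1) * Real.log β1 + (g2 / u2) * Real.log β2 ≤
        (g1 / u1) * Real.log b1 + (g2 / u2) * Real.log b2 := by
      nlinarith [mul_le_mul_of_nonneg_left h1 (le_of_lt ha),
        mul_le_mul_of_nonneg_left h2 (le_of_lt hb)]
    have e1 : Real.log (1 / (2 * b1)) = -(Real.log 2 + Real.log b1) := by
      rw [one_div, Real.log_inv, Real.log_mul two_ne_zero (ne_of_gt hpb1)]
    have e2 : Real.log (1 / (2 * b2)) = -(Real.log 2 + Real.log b2) := by
      rw [one_div, Real.log_inv, Real.log_mul two_ne_zero (ne_of_gt hpb2)]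
    have e3 : Real.log (1 / (2 * β1)) = -(Real.log 2 + Real.log β1) := by
      rw [one_div, Real.log_inv, Real.log_mul two_ne_zero (ne_of_gt hp1)]
    have e4 : Real.log (1 / (2 * β2)) = -(Real.log 2 + Real.log β2) := by
      rw [one_div, Real.log_inv, Real.log_mul two_ne_zero (ne_of_gt hp2)]
    rw [e1, e2, e3, e4]
    nlinarith [key]
end

section
/- Let n ≥ 1 and let u1,...,un, g1,...,gn and beta be positive real numbers. For each i define beta_i* = (g_i · beta · ∏_{x ≠ i} u_x) / (∑_{y=1}^{n} g_y · ∏_{x ≠ y} u_x). Then ∑_{i=1}^{n} beta_i* = beta, and for all positive real numbers beta1,...,beta_n with ∑_{i=1}^{n} beta_i ≤ beta, the quantity ∑_{i=1}^{n} (g_i/u_i)·log(1/(2·beta_i*)) ≤ ∑_{i=1}^{n} (g_i/u_i)·log(1/(2·beta_i)). That is, the allocation (beta_1*,...,beta_n*) minimizes the total privacy loss ∑_i epsilon_i where epsilon_i = (g_i/u_i)·log(1/(2·beta_i)), subject to ∑_i beta_i ≤ beta. -/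
/-!
Writing `wᵢ = gᵢ/uᵢ`, the allocation is `βᵢ* = wᵢ·β / ∑ⱼ wⱼ`, proportional to the weights.
Minimising the loss amounts to maximising `∑ wᵢ log βᵢ` under `∑ βᵢ ≤ β`, and the tangent bound
`log t ≤ t - 1` at `t = bᵢ/βᵢ*` gives `∑ wᵢ (log bᵢ - log βᵢ*) ≤ (∑ⱼ wⱼ)(∑ bᵢ/β - 1) ≤ 0`.
-/

open Real Finset

/-- The optimal FNR-budget allocation for `n` sub-queries:
`βᵢ* = gᵢ·β·∏_{x≠i} uₓ / (∑_y g_y·∏_{x≠y} uₓ)`. -/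
noncomputable def betaStar (n : ℕ) (u g : Fin n → ℝ) (β : ℝ) (i : Fin n) : ℝ :=
  (g i * β * ∏ x ∈ Finset.univ.erase i, u x) /
    (∑ y, g y * ∏ x ∈ Finset.univ.erase y, u x)

section ProportionalAllocation

variable {ι : Type*} [Fintype ι]

theorem sum_mul_div_sum_eq (w : ι → ℝ) (β : ℝ) (hS : ∑ j, w j ≠ 0) :
    ∑ i, w i * β / ∑ j, w j = β := by
  rw [← sum_div, ← sum_mul, mul_div_cancel_left₀ β hS]

theorem sum_mul_log_le_sum_mul_log_proportional (w b : ι → ℝ) {β : ℝ}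
    (hw : ∀ i, 0 < w i) (hb : ∀ i, 0 < b i) (hβ : 0 < β) (hbβ : ∑ i, b i ≤ β) :
    ∑ i, w i * log (b i) ≤ ∑ i, w i * log (w i * β / ∑ j, w j) := by
  set S := ∑ j, w j
  have hS : ∀ i, 0 < S := fun i =>
    (hw i).trans_le (single_le_sum (fun j _ => (hw j).le) (mem_univ i))
  have tangent : ∀ i, w i * log (b i) - w i * log (w i * β / S) ≤ b i * S / β - w i := by
    intro i
    have hp : 0 < w i * β / S := div_pos (mul_pos (hw i) hβ) (hS i)
    calc w i * log (b i) - w i * log (w i * β / S)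
        = w i * log (b i / (w i * β / S)) := by rw [← mul_sub, log_div (hb i).ne' hp.ne']
      _ ≤ w i * (b i / (w i * β / S) - 1) :=
          mul_le_mul_of_nonneg_left (log_le_sub_one_of_pos (div_pos (hb i) hp)) (hw i).le
      _ = b i * S / β - w i := by field_simp [(hw i).ne']
  rw [← sub_nonpos, ← sum_sub_distrib]
  calc ∑ i, (w i * log (b i) - w i * log (w i * β / S))
      ≤ ∑ i, (b i * S / β - w i) := sum_le_sum fun i _ => tangent i
    _ = (∑ i, b i) * S / β - S := by rw [sum_sub_distrib, ← sum_div, ← sum_mul]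
    _ ≤ β * S / β - S := by
        have : 0 ≤ S := sum_nonneg fun j _ => (hw j).le
        gcongr
    _ = 0 := by rw [mul_div_cancel_left₀ S hβ.ne', sub_self]

end ProportionalAllocation

theorem betaStar_eq (n : ℕ) (u g : Fin n → ℝ) (β : ℝ) (hu : ∀ i, u i ≠ 0) (i : Fin n) :
    betaStar n u g β i = g i / u i * β / ∑ j, g j / u j := by
  have hP : ∏ x, u x ≠ 0 := prod_ne_zero_iff.mpr fun x _ => hu x
  have hterm : ∀ j, g j * ∏ x ∈ univ.erase j, u x = g j / u j * ∏ x, u x := fun j => by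
    rw [← mul_prod_erase univ u (mem_univ j)]
    field_simp [hu j]
  rw [betaStar, mul_right_comm, hterm, mul_right_comm _ (∏ x, u x),
    sum_congr rfl fun j _ => hterm j, ← sum_mul, mul_div_mul_right _ _ hP]

/-- Optimal budget apportionment for a complex query of `n` aggregate threshold
sub-queries: the allocation `βᵢ*` sums to `β` and minimizes the total privacy loss
`∑ᵢ (gᵢ/uᵢ)·log(1/(2βᵢ))` subject to `∑ᵢ βᵢ ≤ β`. -/
theorem probe_n_query_apportionment
    (n : ℕ) (hn : 1 ≤ n) (u g : Fin n → ℝ) (β : ℝ)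
    (hu : ∀ i, 0 < u i) (hg : ∀ i, 0 < g i) (hβ : 0 < β) :
    (∑ i, betaStar n u g β i) = β ∧
    ∀ b : Fin n → ℝ, (∀ i, 0 < b i) → (∑ i, b i) ≤ β →
      ∑ i, (g i / u i) * Real.log (1 / (2 * betaStar n u g β i)) ≤
        ∑ i, (g i / u i) * Real.log (1 / (2 * b i)) := by
  simp only [betaStar_eq n u g β fun i => (hu i).ne']
  set w : Fin n → ℝ := fun i => g i / u i
  have hw : ∀ i, 0 < w i := fun i => div_pos (hg i) (hu i)
  have hS : 0 < ∑ j, w j := sum_pos (fun i _ => hw i) (univ_nonempty_iff.mpr ⟨⟨0, hn⟩⟩)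
  refine ⟨sum_mul_div_sum_eq w β hS.ne', fun b hb hbβ => ?_⟩
  have loss_eq : ∀ x : Fin n → ℝ, (∀ i, 0 < x i) →
      ∑ i, w i * log (1 / (2 * x i)) = -(∑ i, w i) * log 2 - ∑ i, w i * log (x i) := by
    intro x hx
    rw [neg_mul, sum_mul, ← sum_neg_distrib, ← sum_sub_distrib]
    refine sum_congr rfl fun i _ => ?_
    rw [one_div, log_inv, log_mul two_ne_zero (hx i).ne']
    ring
  rw [loss_eq _ fun i => div_pos (mul_pos (hw i) hβ) hS, loss_eq b hb]
  linarith [sum_mul_log_le_sum_mul_log_proportional w b hw hb hβ hbβ]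
end

section
/- Let n ≥ 1 and let u1,...,un, g1,...,gn, o1,...,on and beta be positive real numbers. For each i define beta_i* = (g_i · beta · ∏_{x ≠ i} u_x) / (∑_{y=1}^{n} o_y · g_y · ∏_{x ≠ y} u_x). Then ∑_{i=1}^{n} o_i · beta_i* = beta, and for all positive real numbers beta1,...,beta_n with ∑_{i=1}^{n} o_i · beta_i ≤ beta, the quantity ∑_{i=1}^{n} o_i · (g_i/u_i)·log(1/(2·beta_i*)) ≤ ∑_{i=1}^{n} o_i · (g_i/u_i)·log(1/(2·beta_i)). That is, the allocation (beta_1*,...,beta_n*) minimizes the total privacy loss ∑_i o_i·epsilon_i where epsilon_i = (g_i/u_i)·log(1/(2·beta_i)), subject to ∑_i o_i·beta_i ≤ beta. -/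
open Real Finset

/-- The optimal FNR-budget allocation for `n` sub-queries with occurrence
multiplicities `oᵢ`:
`βᵢ* = gᵢ·β·∏_{x≠i} uₓ / (∑_y o_y·g_y·∏_{x≠y} uₓ)`. -/
noncomputable def betaStarOcc (n : ℕ) (u g o : Fin n → ℝ) (β : ℝ) (i : Fin n) : ℝ :=
  (g i * β * ∏ x ∈ Finset.univ.erase i, u x) /
    (∑ y, o y * g y * ∏ x ∈ Finset.univ.erase y, u x)

/-- Optimal budget apportionment for a complex query tree with `n` distinct
sub-queries, sub-query `i` occurring `oᵢ` times: the allocation `βᵢ*` satisfies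
`∑ᵢ oᵢ·βᵢ* = β` and minimizes the total privacy loss
`∑ᵢ oᵢ·(gᵢ/uᵢ)·log(1/(2βᵢ))` subject to `∑ᵢ oᵢ·βᵢ ≤ β`. -/
theorem probe_tree_apportionment
    (n : ℕ) (hn : 1 ≤ n) (u g o : Fin n → ℝ) (β : ℝ)
    (hu : ∀ i, 0 < u i) (hg : ∀ i, 0 < g i) (ho : ∀ i, 0 < o i) (hβ : 0 < β) :
    (∑ i, o i * betaStarOcc n u g o β i) = β ∧
    ∀ b : Fin n → ℝ, (∀ i, 0 < b i) → (∑ i, o i * b i) ≤ β →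
      ∑ i, o i * ((g i / u i) * Real.log (1 / (2 * betaStarOcc n u g o β i))) ≤
        ∑ i, o i * ((g i / u i) * Real.log (1 / (2 * b i))) := by
  have hne : (Finset.univ : Finset (Fin n)).Nonempty := by
    refine Finset.univ_nonempty_iff.mpr ?_
    exact Fin.pos_iff_nonempty.mp hn
  set w : Fin n → ℝ := fun i => g i / u i with hw
  have hwpos : ∀ i, 0 < w i := fun i => div_pos (hg i) (hu i)
  set S : ℝ := ∑ y, o y * w y with hS
  have hSpos : 0 < S :=
    Finset.sum_pos (fun i _ => mul_pos (ho i) (hwpos i)) hne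
  have hP : 0 < ∏ i, u i := Finset.prod_pos (fun i _ => hu i)
  have herase : ∀ i : Fin n, ∏ x ∈ Finset.univ.erase i, u x = (∏ x, u x) / u i := by
    intro i
    rw [eq_div_iff (ne_of_gt (hu i)), mul_comm]
    exact Finset.mul_prod_erase _ _ (Finset.mem_univ i)
  have hden : (∑ y, o y * g y * ∏ x ∈ Finset.univ.erase y, u x) = (∏ x, u x) * S := by
    rw [hS, Finset.mul_sum]
    refine Finset.sum_congr rfl fun y _ => ?_
    rw [herase y]
    have : w y = g y / u y := rfl
    rw [this]
    field_simp
  have hbs : ∀ i, betaStarOcc n u g o β i = w i * β / S := by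
    intro i
    rw [betaStarOcc, herase i, hden]
    have hwi : w i = g i / u i := rfl
    rw [hwi]
    field_simp [hP.ne', (hu i).ne', hSpos.ne']
  have hbspos : ∀ i, 0 < betaStarOcc n u g o β i := by
    intro i; rw [hbs i]; exact div_pos (mul_pos (hwpos i) hβ) hSpos
  constructor
  · have : ∑ i, o i * betaStarOcc n u g o β i = (∑ i, o i * w i) * (β / S) := by
      rw [Finset.sum_mul]
      refine Finset.sum_congr rfl fun i _ => ?_
      rw [hbs i]; ring
    rw [this, ← hS]
    field_simp
  · intro b hb hsum
    have key : ∀ i, o i * (w i * Real.log (1 / (2 * betaStarOcc n u g o β i))) ≤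
        o i * (w i * Real.log (1 / (2 * b i))) + (o i * b i * (S / β) - o i * w i) := by
      intro i
      have hbsi := hbspos i
      have hbi := hb i
      have hlog : Real.log (b i / betaStarOcc n u g o β i) ≤
          b i / betaStarOcc n u g o β i - 1 :=
        Real.log_le_sub_one_of_pos (by positivity)
      have hlogeq : Real.log (1 / (2 * betaStarOcc n u g o β i)) =
          Real.log (1 / (2 * b i)) + Real.log (b i / betaStarOcc n u g o β i) := by
        rw [Real.log_div (one_ne_zero) (by positivity),
            Real.log_div (one_ne_zero) (by positivity),
            Real.log_div (ne_of_gt hbi) (ne_of_gt hbsi),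
            Real.log_mul (two_ne_zero) (ne_of_gt hbsi),
            Real.log_mul (two_ne_zero) (ne_of_gt hbi)]
        ring
      have hratio : b i / betaStarOcc n u g o β i = b i * S / (w i * β) := by
        rw [hbs i]
        field_simp
      have h1 : w i * Real.log (b i / betaStarOcc n u g o β i) ≤
          b i * (S / β) - w i := by
        calc w i * Real.log (b i / betaStarOcc n u g o β i)
            ≤ w i * (b i / betaStarOcc n u g o β i - 1) := by
              exact mul_le_mul_of_nonneg_left hlog (le_of_lt (hwpos i))
          _ = b i * (S / β) - w i := by
              rw [hratio]
              field_simp [(hwpos i).ne', hβ.ne']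
      rw [hlogeq]
      have := mul_le_mul_of_nonneg_left h1 (le_of_lt (ho i))
      nlinarith [this]
    calc ∑ i, o i * (w i * Real.log (1 / (2 * betaStarOcc n u g o β i)))
        ≤ ∑ i, (o i * (w i * Real.log (1 / (2 * b i))) + (o i * b i * (S / β) - o i * w i)) :=
          Finset.sum_le_sum fun i _ => key i
      _ = (∑ i, o i * (w i * Real.log (1 / (2 * b i)))) + ((∑ i, o i * b i) * (S / β) - S) := by
          rw [Finset.sum_add_distrib, Finset.sum_sub_distrib, Finset.sum_mul, hS]
      _ ≤ ∑ i, o i * (w i * Real.log (1 / (2 * b i))) := by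
          have : (∑ i, o i * b i) * (S / β) ≤ β * (S / β) :=
            mul_le_mul_of_nonneg_right hsum (by positivity)
          have hβS : β * (S / β) = S := by field_simp
          linarith
end

section
/- Let (Ω, P) be a probability space and let A, B, C, D be events with P((C ∩ D)ᶜ) > 0, P(C) > 0, P(D) > 0, P(Cᶜ ∩ D) > 0, P(C ∩ Dᶜ) > 0, P(Cᶜ ∩ Dᶜ) > 0 and P(Cᶜ) > 0, P(Dᶜ) > 0. Assume that for each of the three conditioning events E ∈ {Cᶜ ∩ D, C ∩ Dᶜ, Cᶜ ∩ Dᶜ}, A and B are conditionally independent given E, i.e. P[A ∩ B | E] = P[A | E] · P[B | E]; assume moreover P[A | Cᶜ ∩ D] = P[A | Cᶜ], P[B | Cᶜ ∩ D] = P[B | D], P[A | C ∩ Dᶜ] = P[A | C], P[B | C ∩ Dᶜ] = P[B | Dᶜ], P[A | Cᶜ ∩ Dᶜ] = P[A | Cᶜ], and P[B | Cᶜ ∩ Dᶜ] = P[B | Dᶜ]. If P[A | Cᶜ] ≤ α₁ and P[B | Dᶜ] ≤ α₂ for nonnegative reals α₁, α₂, then P[A ∩ B | (C ∩ D)ᶜ]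 ≤ α₁ + α₂. -/
open MeasureTheory

/-- Conditional probability `P[E|F] = P(E ∩ F)/P(F)` as a real number. -/
noncomputable def condProb {Ω : Type*} [MeasurableSpace Ω] (P : Measure Ω)
    (E F : Set Ω) : ℝ :=
  (P (E ∩ F)).toReal / (P F).toReal


lemma condProb_nonneg {Ω : Type*} [MeasurableSpace Ω] (P : Measure Ω)
    (E F : Set Ω) : 0 ≤ condProb P E F :=
  div_nonneg ENNReal.toReal_nonneg ENNReal.toReal_nonneg

lemma condProb_le_one {Ω : Type*} [MeasurableSpace Ω] (P : Measure Ω)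
    [IsProbabilityMeasure P] (E F : Set Ω) : condProb P E F ≤ 1 := by
  unfold condProb
  rcases eq_or_ne ((P F).toReal) 0 with h | h
  · simp [h]
  · rw [div_le_one (lt_of_le_of_ne ENNReal.toReal_nonneg (Ne.symm h))]
    exact ENNReal.toReal_mono (measure_ne_top P F) (measure_mono Set.inter_subset_right)

lemma condProb_mul {Ω : Type*} [MeasurableSpace Ω] (P : Measure Ω)
    [IsProbabilityMeasure P] (E F : Set Ω) (hF : (P F).toReal ≠ 0) :
    (P (E ∩ F)).toReal = condProb P E F * (P F).toReal := by
  unfold condProb; field_simp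

lemma split_meas {Ω : Type*} [MeasurableSpace Ω] (P : Measure Ω)
    (C D : Set Ω) (hC : MeasurableSet C) (hD : MeasurableSet D) (S : Set Ω)
    (hS : MeasurableSet S) :
    P (S ∩ (C ∩ D)ᶜ) = P (S ∩ (Cᶜ ∩ D)) + P (S ∩ (C ∩ Dᶜ)) + P (S ∩ (Cᶜ ∩ Dᶜ)) := by
  have hset : S ∩ (C ∩ D)ᶜ = (S ∩ (Cᶜ ∩ D)) ∪ ((S ∩ (C ∩ Dᶜ)) ∪ (S ∩ (Cᶜ ∩ Dᶜ))) := by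
    ext ω; by_cases hc : ω ∈ C <;> by_cases hd : ω ∈ D <;> simp [hc, hd]
  rw [hset, measure_union, measure_union, add_assoc]
  · rw [Set.disjoint_left]; rintro ω ⟨-, hc, -⟩ ⟨-, hc', -⟩; exact hc' hc
  · exact hS.inter (hC.compl.inter hD.compl)
  · rw [Set.disjoint_left]; rintro ω ⟨-, hc, hd⟩ h
    rcases h with ⟨-, hc', -⟩ | ⟨-, -, hd'⟩
    · exact hc hc'
    · exact hd' hd
  · exact (hS.inter (hC.inter hD.compl)).union (hS.inter (hC.compl.inter hD.compl))

/-- α-bound on the FPR of a 2-query conjunction mechanism: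
if `P[A|Cᶜ] ≤ α₁` and `P[B|Dᶜ] ≤ α₂`, then `P[A ∩ B | (C ∩ D)ᶜ] ≤ α₁ + α₂`. -/
theorem conj_fpr_bound {Ω : Type*} [MeasurableSpace Ω] (P : Measure Ω)
    [IsProbabilityMeasure P] (A B C D : Set Ω)
    (hA : MeasurableSet A) (hB : MeasurableSet B)
    (hC : MeasurableSet C) (hD : MeasurableSet D)
    (hCDc : 0 < P (C ∩ D)ᶜ) (hC0 : 0 < P C) (hD0 : 0 < P D)
    (hCcD : 0 < P (Cᶜ ∩ D)) (hCDc' : 0 < P (C ∩ Dᶜ)) (hCcDc : 0 < P (Cᶜ ∩ Dᶜ))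
    (hCc : 0 < P Cᶜ) (hDc : 0 < P Dᶜ)
    (hindep1 : condProb P (A ∩ B) (Cᶜ ∩ D) =
      condProb P A (Cᶜ ∩ D) * condProb P B (Cᶜ ∩ D))
    (hindep2 : condProb P (A ∩ B) (C ∩ Dᶜ) =
      condProb P A (C ∩ Dᶜ) * condProb P B (C ∩ Dᶜ))
    (hindep3 : condProb P (A ∩ B) (Cᶜ ∩ Dᶜ) =
      condProb P A (Cᶜ ∩ Dᶜ) * condProb P B (Cᶜ ∩ Dᶜ))
    (h1 : condProb P A (Cᶜ ∩ D) = condProb P A Cᶜ)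
    (h2 : condProb P B (Cᶜ ∩ D) = condProb P B D)
    (h3 : condProb P A (C ∩ Dᶜ) = condProb P A C)
    (h4 : condProb P B (C ∩ Dᶜ) = condProb P B Dᶜ)
    (h5 : condProb P A (Cᶜ ∩ Dᶜ) = condProb P A Cᶜ)
    (h6 : condProb P B (Cᶜ ∩ Dᶜ) = condProb P B Dᶜ)
    (α₁ α₂ : ℝ) (hα₁ : 0 ≤ α₁) (hα₂ : 0 ≤ α₂)
    (hb1 : condProb P A Cᶜ ≤ α₁) (hb2 : condProb P B Dᶜ ≤ α₂) :
    condProb P (A ∩ B) (C ∩ D)ᶜ ≤ α₁ + α₂ := by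
  set p1 := (P (Cᶜ ∩ D)).toReal with hp1
  set p2 := (P (C ∩ Dᶜ)).toReal with hp2
  set p3 := (P (Cᶜ ∩ Dᶜ)).toReal with hp3
  have hp1pos : 0 < p1 := ENNReal.toReal_pos hCcD.ne' (measure_ne_top P _)
  have hp2pos : 0 < p2 := ENNReal.toReal_pos hCDc'.ne' (measure_ne_top P _)
  have hp3pos : 0 < p3 := ENNReal.toReal_pos hCcDc.ne' (measure_ne_top P _)
  -- denominator splits
  have hden : (P (C ∩ D)ᶜ).toReal = p1 + p2 + p3 := by
    have := split_meas P C D hC hD Set.univ MeasurableSet.univ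
    simp only [Set.univ_inter] at this
    rw [this, ENNReal.toReal_add, ENNReal.toReal_add] <;>
      first
        | exact measure_ne_top P _
        | exact (ENNReal.add_lt_top.mpr ⟨(measure_lt_top P _), (measure_lt_top P _)⟩).ne
  -- numerator splits
  have hnum : (P ((A ∩ B) ∩ (C ∩ D)ᶜ)).toReal =
      condProb P (A ∩ B) (Cᶜ ∩ D) * p1 + condProb P (A ∩ B) (C ∩ Dᶜ) * p2 +
      condProb P (A ∩ B) (Cᶜ ∩ Dᶜ) * p3 := by
    have := split_meas P C D hC hD (A ∩ B) (hA.inter hB)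
    rw [this, ENNReal.toReal_add, ENNReal.toReal_add,
        condProb_mul P (A ∩ B) _ hp1pos.ne', condProb_mul P (A ∩ B) _ hp2pos.ne',
        condProb_mul P (A ∩ B) _ hp3pos.ne'] <;>
      first
        | rfl
        | exact measure_ne_top P _
        | exact (ENNReal.add_lt_top.mpr ⟨(measure_lt_top P _), (measure_lt_top P _)⟩).ne
  -- bounds on each conditional probability
  have hc1 : condProb P (A ∩ B) (Cᶜ ∩ D) ≤ α₁ + α₂ := by
    rw [hindep1, h1, h2]
    calc condProb P A Cᶜ * condProb P B D ≤ α₁ * 1 :=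
          mul_le_mul hb1 (condProb_le_one P B D) (condProb_nonneg P B D) hα₁
      _ ≤ α₁ + α₂ := by linarith
  have hc2 : condProb P (A ∩ B) (C ∩ Dᶜ) ≤ α₁ + α₂ := by
    rw [hindep2, h3, h4]
    calc condProb P A C * condProb P B Dᶜ ≤ 1 * α₂ :=
          mul_le_mul (condProb_le_one P A C) hb2 (condProb_nonneg P B Dᶜ) zero_le_one
      _ ≤ α₁ + α₂ := by linarith
  have hc3 : condProb P (A ∩ B) (Cᶜ ∩ Dᶜ) ≤ α₁ + α₂ := by
    rw [hindep3, h5, h6]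
    calc condProb P A Cᶜ * condProb P B Dᶜ ≤ 1 * α₂ :=
          mul_le_mul (condProb_le_one P A Cᶜ) hb2 (condProb_nonneg P B Dᶜ) zero_le_one
      _ ≤ α₁ + α₂ := by linarith
  unfold condProb
  rw [hden, hnum, div_le_iff₀ (by linarith)]
  have e1 := mul_le_mul_of_nonneg_right hc1 hp1pos.le
  have e2 := mul_le_mul_of_nonneg_right hc2 hp2pos.le
  have e3 := mul_le_mul_of_nonneg_right hc3 hp3pos.le
  nlinarith [hp1pos, hp2pos, hp3pos]
end

section
/- Let (Ω, P) be a probability space and let A, B, C, D be events with P((C ∩ D)ᶜ) > 0, P(C) > 0, P(D) > 0, P(Cᶜ ∩ D) > 0, P(C ∩ Dᶜ) > 0, P(Cᶜ ∩ Dᶜ) > 0 and P(Cᶜ) > 0, P(Dᶜ) > 0. Assume that for each of the three conditioning events E ∈ {Cᶜ ∩ D, C ∩ Dᶜ, Cᶜ ∩ Dᶜ}, A and B are conditionally independent given E, and that P[A | Cᶜ ∩ D] = P[A | Cᶜ], P[B | Cᶜ ∩ D] = P[B | D], P[A | C ∩ Dᶜ] = P[A | C], P[B | C ∩ Dᶜ]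 = P[B | Dᶜ], P[A | Cᶜ ∩ Dᶜ] = P[A | Cᶜ], and P[B | Cᶜ ∩ Dᶜ] = P[B | Dᶜ]. Then P[A ∩ B | (C ∩ D)ᶜ] ≤ P[A | Cᶜ]·P[B | D] + P[A | C]·P[B | Dᶜ] + P[A | Cᶜ]·P[B | Dᶜ]. -/
open MeasureTheory

/-- FPR of a 2-query conjunction mechanism is bounded by
`FPR₁·TPR₂ + TPR₁·FPR₂ + FPR₁·FPR₂`. -/
theorem conj_fpr_decomposition {Ω : Type*} [MeasurableSpace Ω] (P : Measure Ω)
    [IsProbabilityMeasure P] (A B C D : Set Ω)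
    (hA : MeasurableSet A) (hB : MeasurableSet B)
    (hC : MeasurableSet C) (hD : MeasurableSet D)
    (hCDc : 0 < P (C ∩ D)ᶜ) (hC0 : 0 < P C) (hD0 : 0 < P D)
    (hCcD : 0 < P (Cᶜ ∩ D)) (hCDc' : 0 < P (C ∩ Dᶜ)) (hCcDc : 0 < P (Cᶜ ∩ Dᶜ))
    (hCc : 0 < P Cᶜ) (hDc : 0 < P Dᶜ)
    (hindep1 : condProb P (A ∩ B) (Cᶜ ∩ D) =
      condProb P A (Cᶜ ∩ D) * condProb P B (Cᶜ ∩ D))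
    (hindep2 : condProb P (A ∩ B) (C ∩ Dᶜ) =
      condProb P A (C ∩ Dᶜ) * condProb P B (C ∩ Dᶜ))
    (hindep3 : condProb P (A ∩ B) (Cᶜ ∩ Dᶜ) =
      condProb P A (Cᶜ ∩ Dᶜ) * condProb P B (Cᶜ ∩ Dᶜ))
    (h1 : condProb P A (Cᶜ ∩ D) = condProb P A Cᶜ)
    (h2 : condProb P B (Cᶜ ∩ D) = condProb P B D)
    (h3 : condProb P A (C ∩ Dᶜ) = condProb P A C)
    (h4 : condProb P B (C ∩ Dᶜ) = condProb P B Dᶜ)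
    (h5 : condProb P A (Cᶜ ∩ Dᶜ) = condProb P A Cᶜ)
    (h6 : condProb P B (Cᶜ ∩ Dᶜ) = condProb P B Dᶜ) :
    condProb P (A ∩ B) (C ∩ D)ᶜ ≤
      condProb P A Cᶜ * condProb P B D + condProb P A C * condProb P B Dᶜ +
        condProb P A Cᶜ * condProb P B Dᶜ := by
  have hfin : ∀ S : Set Ω, P S ≠ ⊤ := fun S => measure_ne_top P S
  have hc : (0:ℝ) < (P (C ∩ D)ᶜ).toReal := ENNReal.toReal_pos hCDc.ne' (hfin _)
  have hsub1 : Cᶜ ∩ D ⊆ (C ∩ D)ᶜ := fun x hx hx' => hx.1 hx'.1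
  have hsub2 : C ∩ Dᶜ ⊆ (C ∩ D)ᶜ := fun x hx hx' => hx.2 hx'.2
  have hsub3 : Cᶜ ∩ Dᶜ ⊆ (C ∩ D)ᶜ := fun x hx hx' => hx.1 hx'.1
  have key : ∀ Ei : Set Ω, Ei ⊆ (C ∩ D)ᶜ → 0 < P Ei →
      (P (A ∩ B ∩ Ei)).toReal / (P (C ∩ D)ᶜ).toReal ≤ condProb P (A ∩ B) Ei := by
    intro Ei hsub hpos
    unfold condProb
    have he : (0:ℝ) < (P Ei).toReal := ENNReal.toReal_pos hpos.ne' (hfin _)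
    have hle : (P Ei).toReal ≤ (P (C ∩ D)ᶜ).toReal :=
      ENNReal.toReal_mono (hfin _) (measure_mono hsub)
    gcongr
  -- decomposition of the measure
  have hset : A ∩ B ∩ (C ∩ D)ᶜ =
      (A ∩ B ∩ (Cᶜ ∩ D)) ∪ ((A ∩ B ∩ (C ∩ Dᶜ)) ∪ (A ∩ B ∩ (Cᶜ ∩ Dᶜ))) := by
    ext x
    simp only [Set.mem_inter_iff, Set.mem_union, Set.mem_compl_iff]
    tauto
  have hd23 : Disjoint (A ∩ B ∩ (C ∩ Dᶜ)) (A ∩ B ∩ (Cᶜ ∩ Dᶜ)) := by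
    apply Set.disjoint_left.mpr
    rintro x ⟨_, hx1⟩ ⟨_, hx2⟩
    exact hx2.1 hx1.1
  have hd1 : Disjoint (A ∩ B ∩ (Cᶜ ∩ D)) ((A ∩ B ∩ (C ∩ Dᶜ)) ∪ (A ∩ B ∩ (Cᶜ ∩ Dᶜ))) := by
    apply Set.disjoint_left.mpr
    rintro x ⟨_, hx1⟩ (⟨_, hx2⟩ | ⟨_, hx2⟩)
    · exact hx2.2 hx1.2
    · exact hx2.2 hx1.2
  have hmE2 : MeasurableSet (A ∩ B ∩ (C ∩ Dᶜ)) :=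
    ((hA.inter hB).inter (hC.inter hD.compl))
  have hmE3 : MeasurableSet (A ∩ B ∩ (Cᶜ ∩ Dᶜ)) :=
    ((hA.inter hB).inter (hC.compl.inter hD.compl))
  have hmeas : P (A ∩ B ∩ (C ∩ D)ᶜ) =
      P (A ∩ B ∩ (Cᶜ ∩ D)) + (P (A ∩ B ∩ (C ∩ Dᶜ)) + P (A ∩ B ∩ (Cᶜ ∩ Dᶜ))) := by
    rw [hset, measure_union hd1 (hmE2.union hmE3), measure_union hd23 hmE3]
  have hmeasR : (P (A ∩ B ∩ (C ∩ D)ᶜ)).toReal =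
      (P (A ∩ B ∩ (Cᶜ ∩ D))).toReal + (P (A ∩ B ∩ (C ∩ Dᶜ))).toReal +
        (P (A ∩ B ∩ (Cᶜ ∩ Dᶜ))).toReal := by
    rw [hmeas, ENNReal.toReal_add (hfin _) (ENNReal.add_ne_top.mpr ⟨hfin _, hfin _⟩),
      ENNReal.toReal_add (hfin _) (hfin _)]
    ring
  have hmain : condProb P (A ∩ B) (C ∩ D)ᶜ =
      (P (A ∩ B ∩ (Cᶜ ∩ D))).toReal / (P (C ∩ D)ᶜ).toReal +
      (P (A ∩ B ∩ (C ∩ Dᶜ))).toReal / (P (C ∩ D)ᶜ).toReal +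
      (P (A ∩ B ∩ (Cᶜ ∩ Dᶜ))).toReal / (P (C ∩ D)ᶜ).toReal := by
    unfold condProb
    rw [hmeasR]
    ring
  rw [hmain]
  have k1 := key _ hsub1 hCcD
  have k2 := key _ hsub2 hCDc'
  have k3 := key _ hsub3 hCcDc
  rw [hindep1, h1, h2] at k1
  rw [hindep2, h3, h4] at k2
  rw [hindep3, h5, h6] at k3
  linarith
end

section
/- Let (Ω, P) be a probability space and let A, B, C, D be events with P(C ∪ D) > 0, P(C) > 0, P(D) > 0, P(Cᶜ ∩ D) > 0, P(C ∩ Dᶜ) > 0, P(C ∩ D) > 0 and P(Cᶜ) > 0, P(Dᶜ) > 0. Assume that for each of the three conditioning events E ∈ {Cᶜ ∩ D, C ∩ Dᶜ, C ∩ D}, Aᶜ and Bᶜ are conditionally independent given E, and that P[Aᶜ | Cᶜ ∩ D] = P[Aᶜ | Cᶜ], P[Bᶜ | Cᶜ ∩ D] = P[Bᶜ | D], P[Aᶜ | C ∩ Dᶜ] = P[Aᶜ | C], P[Bᶜ | C ∩ Dᶜ] = P[Bᶜ | Dᶜ], P[Aᶜ | C ∩ D] = P[Aᶜ | C], and P[Bᶜ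 | C ∩ D] = P[Bᶜ | D]. Then P[(A ∪ B)ᶜ | C ∪ D] ≤ P[Aᶜ | Cᶜ]·P[Bᶜ | D] + P[Aᶜ | C]·P[Bᶜ | Dᶜ] + P[Aᶜ | C]·P[Bᶜ | D]. -/
open MeasureTheory

/-- FNR of a 2-query disjunction mechanism is bounded by
`TNR₁·FNR₂ + FNR₁·TNR₂ + FNR₁·FNR₂`. -/
theorem disj_fnr_decomposition {Ω : Type*} [MeasurableSpace Ω] (P : Measure Ω)
    [IsProbabilityMeasure P] (A B C D : Set Ω)
    (hA : MeasurableSet A) (hB : MeasurableSet B)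
    (hC : MeasurableSet C) (hD : MeasurableSet D)
    (hCuD : 0 < P (C ∪ D)) (hC0 : 0 < P C) (hD0 : 0 < P D)
    (hCcD : 0 < P (Cᶜ ∩ D)) (hCDc : 0 < P (C ∩ Dᶜ)) (hCD : 0 < P (C ∩ D))
    (hCc : 0 < P Cᶜ) (hDc : 0 < P Dᶜ)
    (hindep1 : condProb P (Aᶜ ∩ Bᶜ) (Cᶜ ∩ D) =
      condProb P Aᶜ (Cᶜ ∩ D) * condProb P Bᶜ (Cᶜ ∩ D))
    (hindep2 : condProb P (Aᶜ ∩ Bᶜ) (C ∩ Dᶜ) =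
      condProb P Aᶜ (C ∩ Dᶜ) * condProb P Bᶜ (C ∩ Dᶜ))
    (hindep3 : condProb P (Aᶜ ∩ Bᶜ) (C ∩ D) =
      condProb P Aᶜ (C ∩ D) * condProb P Bᶜ (C ∩ D))
    (h1 : condProb P Aᶜ (Cᶜ ∩ D) = condProb P Aᶜ Cᶜ)
    (h2 : condProb P Bᶜ (Cᶜ ∩ D) = condProb P Bᶜ D)
    (h3 : condProb P Aᶜ (C ∩ Dᶜ) = condProb P Aᶜ C)
    (h4 : condProb P Bᶜ (C ∩ Dᶜ) = condProb P Bᶜ Dᶜ)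
    (h5 : condProb P Aᶜ (C ∩ D) = condProb P Aᶜ C)
    (h6 : condProb P Bᶜ (C ∩ D) = condProb P Bᶜ D) :
    condProb P (A ∪ B)ᶜ (C ∪ D) ≤
      condProb P Aᶜ Cᶜ * condProb P Bᶜ D + condProb P Aᶜ C * condProb P Bᶜ Dᶜ +
        condProb P Aᶜ C * condProb P Bᶜ D := by
  have key1 : condProb P (Aᶜ ∩ Bᶜ) (Cᶜ ∩ D) = condProb P Aᶜ Cᶜ * condProb P Bᶜ D := by
    rw [hindep1, h1, h2]
  have key2 : condProb P (Aᶜ ∩ Bᶜ) (C ∩ Dᶜ) = condProb P Aᶜ C * condProb P Bᶜ Dᶜ := by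
    rw [hindep2, h3, h4]
  have key3 : condProb P (Aᶜ ∩ Bᶜ) (C ∩ D) = condProb P Aᶜ C * condProb P Bᶜ D := by
    rw [hindep3, h5, h6]
  rw [← key1, ← key2, ← key3]
  have hcompl : (A ∪ B)ᶜ = Aᶜ ∩ Bᶜ := Set.compl_union A B
  rw [hcompl]
  set S := Aᶜ ∩ Bᶜ with hSdef
  have hSm : MeasurableSet S := hA.compl.inter hB.compl
  -- decomposition
  have hdecomp : S ∩ (C ∪ D) = (S ∩ (Cᶜ ∩ D)) ∪ ((S ∩ (C ∩ Dᶜ)) ∪ (S ∩ (C ∩ D))) := by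
    ext x
    by_cases hx : x ∈ C <;> by_cases hy : x ∈ D <;> simp [hx, hy, Set.mem_inter_iff]
  have hdisj1 : Disjoint (S ∩ (Cᶜ ∩ D)) ((S ∩ (C ∩ Dᶜ)) ∪ (S ∩ (C ∩ D))) := by
    rw [Set.disjoint_left]
    rintro x ⟨-, hxc, -⟩ hx
    rcases hx with ⟨-, hxC, -⟩ | ⟨-, hxC, -⟩ <;> exact hxc hxC
  have hdisj2 : Disjoint (S ∩ (C ∩ Dᶜ)) (S ∩ (C ∩ D)) := by
    rw [Set.disjoint_left]
    rintro x ⟨-, -, hxd⟩ ⟨-, -, hxD⟩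
    exact hxd hxD
  have hm2 : MeasurableSet (S ∩ (C ∩ Dᶜ)) := hSm.inter (hC.inter hD.compl)
  have hm3 : MeasurableSet (S ∩ (C ∩ D)) := hSm.inter (hC.inter hD)
  have hsum : P (S ∩ (C ∪ D)) = P (S ∩ (Cᶜ ∩ D)) + P (S ∩ (C ∩ Dᶜ)) + P (S ∩ (C ∩ D)) := by
    rw [hdecomp, measure_union hdisj1 (hm2.union hm3), measure_union hdisj2 hm3, add_assoc]
  have hfin : ∀ T : Set Ω, P T ≠ ⊤ := fun T => measure_ne_top P T
  have hsumR : (P (S ∩ (C ∪ D))).toReal =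
      (P (S ∩ (Cᶜ ∩ D))).toReal + (P (S ∩ (C ∩ Dᶜ))).toReal + (P (S ∩ (C ∩ D))).toReal := by
    rw [hsum, ENNReal.toReal_add (ENNReal.add_ne_top.2 ⟨hfin _, hfin _⟩) (hfin _),
      ENNReal.toReal_add (hfin _) (hfin _)]
  have htpos : (0:ℝ) < (P (C ∪ D)).toReal := ENNReal.toReal_pos hCuD.ne' (hfin _)
  have he1pos : (0:ℝ) < (P (Cᶜ ∩ D)).toReal := ENNReal.toReal_pos hCcD.ne' (hfin _)
  have he2pos : (0:ℝ) < (P (C ∩ Dᶜ)).toReal := ENNReal.toReal_pos hCDc.ne' (hfin _)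
  have he3pos : (0:ℝ) < (P (C ∩ D)).toReal := ENNReal.toReal_pos hCD.ne' (hfin _)
  have hle1 : (P (Cᶜ ∩ D)).toReal ≤ (P (C ∪ D)).toReal :=
    ENNReal.toReal_mono (hfin _) (measure_mono fun x ⟨_, h⟩ => Or.inr h)
  have hle2 : (P (C ∩ Dᶜ)).toReal ≤ (P (C ∪ D)).toReal :=
    ENNReal.toReal_mono (hfin _) (measure_mono fun x ⟨h, _⟩ => Or.inl h)
  have hle3 : (P (C ∩ D)).toReal ≤ (P (C ∪ D)).toReal :=
    ENNReal.toReal_mono (hfin _) (measure_mono fun x ⟨h, _⟩ => Or.inl h)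
  unfold condProb
  rw [hsumR, add_div, add_div]
  gcongr <;> exact ENNReal.toReal_nonneg
end
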